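/- Let y_1,...,y_m ∈ ℝ, λ > 0, M_y > 0 with |∑_{i=k}^{l} y_i| ≤ M_y·√(l−k+1) for all 1 ≤ k ≤ l ≤ m, let a, b ∈ ℝ be nonzero with opposite signs (sign(a) ≠ sign(b)), and let x̂ minimize G(x_1,...,x_m) = ∑_{i=1}^m (x_i − y_i)² + λ(|x_1 − a| + |x_m − b| + ∑_{i=1}^{m−1} |x_i − x_{i+1}|). Then for every 1 ≤ i ≤ m, |x̂_i| ≤ max( M_y/√i, M_y/√(m+1−i), M_y²/(4λ) ). -/

import Mathlib

/-!
Let `c = x̂ i > 0` and let `[k, l]` be the maximal run of indices around `i` on which `x̂ ≥ c`.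
Lowering `x̂` by `ε` on `[k, l]` changes the fit term by `n ε² - 2ε ∑_{[k,l]} (x̂ - y)`,
where `n = l - k + 1`, and each of the two jump penalties at the ends of the run by `-λε` if the
neighbouring value (an entry of `x̂`, or `a`, `b` at the ends) is below `c`, and by at most `λε`
otherwise. Letting `ε → 0⁺` in the minimality of `x̂` gives `∑_{[k,l]} x̂ ≤ ∑_{[k,l]} y - λ` when
both neighbours are below `c` and `∑_{[k,l]} x̂ ≤ ∑_{[k,l]} y` when one is. A neighbour `≥ c > 0`
is a positive boundary value, and as `a`, `b` have opposite signs at most one is. With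
`∑_{[k,l]} y ≤ M_y √n` this yields `c n ≤ M_y √n - λ`, hence `c ≤ M_y² / (4λ)`, or `c n ≤ M_y √n`
with `k = 1` or `l = m`, hence `c ≤ M_y / √i` or `c ≤ M_y / √(m + 1 - i)`. The lower bound is the
upper bound for `-y`, `-a`, `-b`.
-/

open Finset Filter Topology

theorem Nat.exists_maximal_interval {p : ℕ → Prop} {lo hi i : ℕ} (hlo : lo ≤ i) (hhi : i ≤ hi)
    (hp : p i) :
    ∃ k l, lo ≤ k ∧ k ≤ i ∧ i ≤ l ∧ l ≤ hi ∧ (∀ j ∈ Icc k l, p j) ∧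
      (lo < k → ¬ p (k - 1)) ∧ (l < hi → ¬ p (l + 1)) := by
  classical
  have hii : ∀ j ∈ Icc i i, p j := by simpa using hp
  have hex : ∃ k, lo ≤ k ∧ ∀ j ∈ Icc k i, p j := ⟨i, hlo, hii⟩
  set k := Nat.find hex
  set l := Nat.findGreatest (fun l => ∀ j ∈ Icc i l, p j) hi
  obtain ⟨hlok, hk⟩ : lo ≤ k ∧ ∀ j ∈ Icc k i, p j := Nat.find_spec hex
  have hl : ∀ j ∈ Icc i l, p j := Nat.findGreatest_spec (P := fun l => ∀ j ∈ Icc i l, p j) hhi hii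
  refine ⟨k, l, hlok, Nat.find_min' hex ⟨hlo, hii⟩, Nat.le_findGreatest hhi hii,
    Nat.findGreatest_le hi, fun j hj => ?_, fun hlt hpk => ?_, fun hlt hpl => ?_⟩
  · rcases le_total j i with hji | hij
    · exact hk j (by simp_all)
    · exact hl j (by simp_all)
  · refine Nat.find_min hex (by omega : k - 1 < k) ⟨by omega, fun j hj => ?_⟩
    rcases eq_or_ne j (k - 1) with rfl | hne
    · exact hpk
    · exact hk j (by simp only [Finset.mem_Icc] at hj ⊢; omega)
  · refine Nat.findGreatest_is_greatest (Nat.lt_succ_self l) hlt fun j hj => ?_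
    rcases eq_or_ne j (l + 1) with rfl | hne
    · exact hpl
    · exact hl j (by simp only [Finset.mem_Icc] at hj ⊢; omega)

def withBoundary (m : ℕ) (a b : ℝ) (x : ℕ → ℝ) (j : ℕ) : ℝ :=
  if j = 0 then a else if j = m + 1 then b else x j

def fusedObjective (m : ℕ) (y : ℕ → ℝ) (a b lam : ℝ) (x : ℕ → ℝ) : ℝ :=
  ∑ j ∈ Icc 1 m, (x j - y j) ^ 2 +
    lam * ∑ j ∈ Icc 0 m, |withBoundary m a b x j - withBoundary m a b x (j + 1)|

def lowerOn (s : Finset ℕ) (ε : ℝ) (x : ℕ → ℝ) (j : ℕ) : ℝ :=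
  if j ∈ s then x j - ε else x j

section withBoundary

variable {m j : ℕ} {a b : ℝ} {x : ℕ → ℝ}

@[simp] lemma withBoundary_zero : withBoundary m a b x 0 = a := rfl

@[simp] lemma withBoundary_succ_self : withBoundary m a b x (m + 1) = b := by
  simp [withBoundary]

lemma withBoundary_of_mem_Icc (hj : j ∈ Icc 1 m) : withBoundary m a b x j = x j := by
  simp only [Finset.mem_Icc] at hj
  simp only [withBoundary, if_neg (show j ≠ 0 by omega), if_neg (show j ≠ m + 1 by omega)]

lemma withBoundary_neg : withBoundary m (-a) (-b) (-x) = -withBoundary m a b x := by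
  funext j
  simp only [withBoundary, Pi.neg_apply]
  split_ifs <;> rfl

lemma withBoundary_lowerOn {k l : ℕ} (hk : 1 ≤ k) (hl : l ≤ m) (ε : ℝ) :
    withBoundary m a b (lowerOn (Icc k l) ε x) = lowerOn (Icc k l) ε (withBoundary m a b x) := by
  funext j
  simp only [withBoundary, lowerOn, Finset.mem_Icc]
  split_ifs <;> first | rfl | omega

lemma withBoundary_pred_lt_or_eq_one {c : ℝ} {k : ℕ} (hk : 1 ≤ k) (hkm : k ≤ m + 1)
    (hleft : 1 < k → ¬ c ≤ x (k - 1)) :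
    withBoundary m a b x (k - 1) < c ∨ (k = 1 ∧ c ≤ a) := by
  rcases hk.eq_or_lt with hk1 | hk1
  · rw [← hk1, Nat.sub_self, withBoundary_zero]
    exact (lt_or_ge a c).imp_right fun h => ⟨rfl, h⟩
  · rw [withBoundary_of_mem_Icc (by simp; omega)]
    exact Or.inl (lt_of_not_ge (hleft hk1))

lemma withBoundary_succ_lt_or_eq {c : ℝ} {l : ℕ} (hl : l ≤ m)
    (hright : l < m → ¬ c ≤ x (l + 1)) :
    withBoundary m a b x (l + 1) < c ∨ (l = m ∧ c ≤ b) := by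
  rcases hl.eq_or_lt with hlm | hlm
  · rw [hlm, withBoundary_succ_self]
    exact (lt_or_ge b c).imp_right fun h => ⟨rfl, h⟩
  · rw [withBoundary_of_mem_Icc (by simp; omega)]
    exact Or.inl (lt_of_not_ge (hright hlm))

end withBoundary

lemma fusedObjective_eq {m : ℕ} (hm : 1 ≤ m) (y : ℕ → ℝ) (a b lam : ℝ) (x : ℕ → ℝ) :
    fusedObjective m y a b lam x = ∑ j ∈ Icc 1 m, (x j - y j) ^ 2 +
      lam * (|x 1 - a| + |x m - b| + ∑ j ∈ Icc 1 (m - 1), |x j - x (j + 1)|) := by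
  obtain ⟨n, rfl⟩ : ∃ n, m = n + 1 := ⟨m - 1, by omega⟩
  have hmid : ∀ j ∈ Icc 1 n,
      |withBoundary (n + 1) a b x j - withBoundary (n + 1) a b x (j + 1)| = |x j - x (j + 1)| := by
    intro j hj
    simp only [Finset.mem_Icc] at hj
    rw [withBoundary_of_mem_Icc (by simp; omega), withBoundary_of_mem_Icc (by simp; omega)]
  rw [fusedObjective, ← add_sum_Ioc_eq_sum_Icc (Nat.zero_le _), ← Icc_add_one_left_eq_Ioc,
    zero_add, sum_Icc_succ_top (by omega : 1 ≤ n + 1) (fun j => |_ - _|), Nat.add_sub_cancel,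
    sum_congr rfl hmid, withBoundary_zero, withBoundary_succ_self,
    withBoundary_of_mem_Icc (by simp), withBoundary_of_mem_Icc (by simp), abs_sub_comm a]
  ring

lemma fusedObjective_neg (m : ℕ) (y : ℕ → ℝ) (a b lam : ℝ) (x : ℕ → ℝ) :
    fusedObjective m (-y) (-a) (-b) lam (-x) = fusedObjective m y a b lam x := by
  simp only [fusedObjective, withBoundary_neg, Pi.neg_apply, ← neg_sub', abs_neg, neg_sq]

lemma sum_sq_lowerOn {s t : Finset ℕ} (hst : s ⊆ t) (ε : ℝ) (x y : ℕ → ℝ) :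
    ∑ j ∈ t, (lowerOn s ε x j - y j) ^ 2 =
      ∑ j ∈ t, (x j - y j) ^ 2 - 2 * ε * ∑ j ∈ s, (x j - y j) + #s * ε ^ 2 := by
  have h : ∀ j ∈ t, (lowerOn s ε x j - y j) ^ 2 =
      (x j - y j) ^ 2 + if j ∈ s then ε ^ 2 - 2 * ε * (x j - y j) else 0 := by
    intro j _
    unfold lowerOn
    split_ifs <;> ring
  rw [sum_congr rfl h, sum_add_distrib, sum_ite_mem, inter_eq_right.2 hst, sum_sub_distrib,
    sum_const, nsmul_eq_mul, mul_sum]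
  ring

lemma sum_abs_sub_lowerOn_Icc {k l : ℕ} {t : Finset ℕ} (hk : 1 ≤ k) (hkl : k ≤ l)
    (hkt : k - 1 ∈ t) (hlt : l ∈ t) (ε : ℝ) (f : ℕ → ℝ) :
    ∑ j ∈ t, |lowerOn (Icc k l) ε f j - lowerOn (Icc k l) ε f (j + 1)| =
      ∑ j ∈ t, |f j - f (j + 1)| + (|f (k - 1) - (f k - ε)| - |f (k - 1) - f k|) +
        (|f (l + 1) - (f l - ε)| - |f (l + 1) - f l|) := by
  rw [add_assoc, ← sub_eq_iff_eq_add', ← sum_sub_distrib,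
    sum_eq_add_of_mem (k - 1) l hkt hlt (by omega)]
  · simp only [lowerOn, Finset.mem_Icc, Nat.sub_add_cancel hk]
    simp only [show ¬ (k ≤ k - 1 ∧ k - 1 ≤ l) by omega, show ¬ (k ≤ l + 1 ∧ l + 1 ≤ l) by omega,
      le_refl, hkl, and_self, if_true, if_false]
    rw [abs_sub_comm (f l - ε), abs_sub_comm (f l)]
  · intro j _ hj
    simp only [lowerOn, Finset.mem_Icc]
    split_ifs <;> first | omega | simp

lemma fusedObjective_lowerOn_Icc {m k l : ℕ} (hk : 1 ≤ k) (hkl : k ≤ l) (hl : l ≤ m)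
    (y : ℕ → ℝ) (a b lam ε : ℝ) (x : ℕ → ℝ) :
    fusedObjective m y a b lam (lowerOn (Icc k l) ε x) =
      fusedObjective m y a b lam x - 2 * ε * ∑ j ∈ Icc k l, (x j - y j) + #(Icc k l) * ε ^ 2 +
        lam * ((|withBoundary m a b x (k - 1) - (x k - ε)| - |withBoundary m a b x (k - 1) - x k|) +
          (|withBoundary m a b x (l + 1) - (x l - ε)| - |withBoundary m a b x (l + 1) - x l|)) := by
  have hsub : Icc k l ⊆ Icc 1 m := Icc_subset_Icc hk hl
  rw [fusedObjective, fusedObjective, sum_sq_lowerOn hsub, withBoundary_lowerOn hk hl,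
    sum_abs_sub_lowerOn_Icc hk hkl (by simp; omega) (by simp; omega),
    withBoundary_of_mem_Icc (j := k) (hsub (by simp [hkl])),
    withBoundary_of_mem_Icc (j := l) (hsub (by simp [hkl]))]
  ring

lemma abs_sub_sub_sub_abs_sub_le (v u : ℝ) {ε : ℝ} (hε : 0 ≤ ε) :
    |v - (u - ε)| - |v - u| ≤ ε := by
  calc |v - (u - ε)| - |v - u| ≤ |v - (u - ε) - (v - u)| := abs_sub_abs_le_abs_sub _ _
    _ = ε := by rw [show v - (u - ε) - (v - u) = ε by ring, abs_of_nonneg hε]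

lemma eventually_abs_sub_sub_sub_abs_sub_eq_neg {v u c : ℝ} (hv : v < c) (hu : c ≤ u) :
    ∀ᶠ ε in 𝓝[>] 0, |v - (u - ε)| - |v - u| = -ε := by
  filter_upwards [Ioo_mem_nhdsGT (sub_pos.2 hv)] with ε hε
  rw [abs_of_neg (by linarith [hε.2]), abs_of_neg (by linarith)]
  ring

lemma nonpos_of_eventually_mul_le_mul_sq {A n : ℝ} (h : ∀ᶠ ε in 𝓝[>] 0, A * ε ≤ n * ε ^ 2) :
    A ≤ 0 := by
  have hlim : Tendsto (fun ε => n * ε) (𝓝[>] 0) (𝓝 0) := by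
    simpa using ((continuous_const_mul n).tendsto 0).mono_left nhdsWithin_le_nhds
  refine ge_of_tendsto hlim ?_
  filter_upwards [h, self_mem_nhdsWithin] with ε hε (hpos : 0 < ε)
  exact le_of_mul_le_mul_right (by linarith) hpos

lemma le_sq_div_four_mul_of_mul_sq_le {c M lam t : ℝ} (hlam : 0 < lam)
    (h : c * t ^ 2 ≤ M * t - lam) : c ≤ M ^ 2 / (4 * lam) := by
  have ht : t ≠ 0 := by
    rintro rfl
    linarith
  have h4 : 4 * lam * c * t ^ 2 ≤ M ^ 2 * t ^ 2 := by nlinarith [sq_nonneg (M * t - 2 * lam)]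
  rw [le_div_iff₀ (by positivity), mul_comm]
  exact le_of_mul_le_mul_right h4 (by positivity)

lemma le_div_sqrt_of_mul_le_mul_sqrt {c M n q : ℝ} (hc : 0 < c) (hq : 0 < q) (hqn : q ≤ n)
    (h : c * n ≤ M * √n) : c ≤ M / √q := by
  have hn : 0 < √n := Real.sqrt_pos.2 (hq.trans_le hqn)
  have hcn : c * √n ≤ M := by
    refine le_of_mul_le_mul_right ?_ hn
    rwa [mul_assoc, Real.mul_self_sqrt (hq.trans_le hqn).le]
  rw [le_div_iff₀ (Real.sqrt_pos.2 hq)]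
  exact (mul_le_mul_of_nonneg_left (Real.sqrt_le_sqrt hqn) hc.le).trans hcn

section Minimizer

variable {m : ℕ} {y x : ℕ → ℝ} {a b lam My c : ℝ}

lemma mul_le_of_forall_fusedObjective_le_of_eventually
    (hx : ∀ z, fusedObjective m y a b lam x ≤ fusedObjective m y a b lam z)
    {k l : ℕ} (hk : 1 ≤ k) (hkl : k ≤ l) (hl : l ≤ m) (hc : ∀ j ∈ Icc k l, c ≤ x j)
    (hy : ∑ j ∈ Icc k l, y j ≤ My * √(l - k + 1)) (ρ : ℝ)
    (hedge : ∀ᶠ ε in 𝓝[>] 0,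
      lam * ((|withBoundary m a b x (k - 1) - (x k - ε)| - |withBoundary m a b x (k - 1) - x k|) +
        (|withBoundary m a b x (l + 1) - (x l - ε)| - |withBoundary m a b x (l + 1) - x l|)) ≤
          -ρ * ε) :
    c * (l - k + 1) ≤ My * √(l - k + 1) - ρ / 2 := by
  set S := ∑ j ∈ Icc k l, (x j - y j)
  have hS : 2 * S + ρ ≤ 0 := by
    refine nonpos_of_eventually_mul_le_mul_sq (n := #(Icc k l)) ?_
    filter_upwards [hedge] with ε hε
    have := hx (lowerOn (Icc k l) ε x)
    rw [fusedObjective_lowerOn_Icc hk hkl hl] at this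
    linarith
  have hcard : (#(Icc k l) : ℝ) = l - k + 1 := by
    rw [Nat.card_Icc, Nat.cast_sub (by omega)]
    push_cast
    ring
  calc c * (l - k + 1) = ∑ j ∈ Icc k l, c := by rw [sum_const, nsmul_eq_mul, hcard, mul_comm]
    _ ≤ ∑ j ∈ Icc k l, x j := sum_le_sum hc
    _ = S + ∑ j ∈ Icc k l, y j := by simp only [S, sum_sub_distrib, sub_add_cancel]
    _ ≤ My * √(l - k + 1) - ρ / 2 := by linarith

lemma mul_le_sub_of_forall_fusedObjective_le
    (hx : ∀ z, fusedObjective m y a b lam x ≤ fusedObjective m y a b lam z)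
    {k l : ℕ} (hk : 1 ≤ k) (hkl : k ≤ l) (hl : l ≤ m) (hc : ∀ j ∈ Icc k l, c ≤ x j)
    (hy : ∑ j ∈ Icc k l, y j ≤ My * √(l - k + 1))
    (hL : withBoundary m a b x (k - 1) < c) (hR : withBoundary m a b x (l + 1) < c) :
    c * (l - k + 1) ≤ My * √(l - k + 1) - lam := by
  have := mul_le_of_forall_fusedObjective_le_of_eventually hx hk hkl hl hc hy (2 * lam) (by
    filter_upwards [eventually_abs_sub_sub_sub_abs_sub_eq_neg hL (hc k (by simp [hkl])),
      eventually_abs_sub_sub_sub_abs_sub_eq_neg hR (hc l (by simp [hkl]))] with ε h1 h2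
    rw [h1, h2]
    linarith)
  linarith

lemma mul_le_of_forall_fusedObjective_le
    (hx : ∀ z, fusedObjective m y a b lam x ≤ fusedObjective m y a b lam z) (hlam : 0 ≤ lam)
    {k l : ℕ} (hk : 1 ≤ k) (hkl : k ≤ l) (hl : l ≤ m) (hc : ∀ j ∈ Icc k l, c ≤ x j)
    (hy : ∑ j ∈ Icc k l, y j ≤ My * √(l - k + 1))
    (h : withBoundary m a b x (k - 1) < c ∨ withBoundary m a b x (l + 1) < c) :
    c * (l - k + 1) ≤ My * √(l - k + 1) := by
  have hxk := hc k (by simp [hkl])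
  have hxl := hc l (by simp [hkl])
  suffices ∀ᶠ ε in 𝓝[>] 0,
      lam * ((|withBoundary m a b x (k - 1) - (x k - ε)| - |withBoundary m a b x (k - 1) - x k|) +
        (|withBoundary m a b x (l + 1) - (x l - ε)| - |withBoundary m a b x (l + 1) - x l|)) ≤
          -0 * ε by
    simpa using mul_le_of_forall_fusedObjective_le_of_eventually hx hk hkl hl hc hy 0 this
  rcases h with hL | hR
  · filter_upwards [eventually_abs_sub_sub_sub_abs_sub_eq_neg hL hxk, self_mem_nhdsWithin]
      with ε h1 (hε : 0 < ε)
    rw [h1]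
    nlinarith [abs_sub_sub_sub_abs_sub_le (withBoundary m a b x (l + 1)) (x l) hε.le]
  · filter_upwards [eventually_abs_sub_sub_sub_abs_sub_eq_neg hR hxl, self_mem_nhdsWithin]
      with ε h1 (hε : 0 < ε)
    rw [h1]
    nlinarith [abs_sub_sub_sub_abs_sub_le (withBoundary m a b x (k - 1)) (x k) hε.le]

theorem le_max_of_forall_fusedObjective_le
    (hx : ∀ z, fusedObjective m y a b lam x ≤ fusedObjective m y a b lam z)
    (hab : ¬ (0 < a ∧ 0 < b)) (hlam : 0 < lam)
    (hy : ∀ k l : ℕ, 1 ≤ k → k ≤ l → l ≤ m → ∑ j ∈ Icc k l, y j ≤ My * √(l - k + 1))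
    {i : ℕ} (hi : 1 ≤ i) (him : i ≤ m) :
    x i ≤ max (max (My / √i) (My / √(m + 1 - i))) (My ^ 2 / (4 * lam)) := by
  rcases le_or_gt (x i) 0 with hc | hc
  · exact le_max_of_le_right (hc.trans (by positivity))
  obtain ⟨k, l, hk, hki, hil, hlm, hblock, hleft, hright⟩ :=
    Nat.exists_maximal_interval (p := fun j => x i ≤ x j) hi him le_rfl
  have hkl := hki.trans hil
  have hkr : (k : ℝ) ≤ i := by exact_mod_cast hki
  have hir : (i : ℝ) ≤ l := by exact_mod_cast hil
  rcases withBoundary_pred_lt_or_eq_one (m := m) (a := a) (b := b) hk (by omega) hleft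
    with hL | ⟨rfl, ha⟩ <;>
  rcases withBoundary_succ_lt_or_eq (a := a) (b := b) hlm hright with hR | ⟨rfl, hb⟩
  · have := mul_le_sub_of_forall_fusedObjective_le hx hk hkl hlm hblock (hy k l hk hkl hlm) hL hR
    refine le_max_of_le_right (le_sq_div_four_mul_of_mul_sq_le hlam (t := √(l - k + 1)) ?_)
    rwa [Real.sq_sqrt (by linarith)]
  · have := mul_le_of_forall_fusedObjective_le hx hlam.le hk hkl le_rfl hblock
      (hy k l hk hkl le_rfl) (Or.inl hL)
    exact le_max_of_le_left (le_max_of_le_right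
      (le_div_sqrt_of_mul_le_mul_sqrt hc (by linarith) (by linarith) this))
  · have := mul_le_of_forall_fusedObjective_le hx hlam.le le_rfl hkl hlm hblock
      (hy 1 l le_rfl hkl hlm) (Or.inr hR)
    rw [Nat.cast_one, sub_add_cancel] at this
    exact le_max_of_le_left (le_max_of_le_left
      (le_div_sqrt_of_mul_le_mul_sqrt hc (by positivity) hir this))
  · exact absurd ⟨hc.trans_le ha, hc.trans_le hb⟩ hab

end Minimizer

theorem fused_lasso_one_interval_elementwise_bound_opposite_signs_general
    (m : ℕ)
    (y : ℕ → ℝ) (a b : ℝ) (lam My : ℝ) (hlam : 0 < lam)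
    (hsign : Real.sign a ≠ Real.sign b)
    (hy : ∀ k l : ℕ, 1 ≤ k → k ≤ l → l ≤ m →
      |∑ i ∈ Finset.Icc k l, y i| ≤ My * Real.sqrt (l - k + 1))
    (G : (ℕ → ℝ) → ℝ)
    (hG : ∀ z : ℕ → ℝ, G z =
      ∑ i ∈ Finset.Icc 1 m, (z i - y i) ^ 2
        + lam * (|z 1 - a| + |z m - b| + ∑ i ∈ Finset.Icc 1 (m - 1), |z i - z (i + 1)|))
    (xh : ℕ → ℝ) (hmin : ∀ z : ℕ → ℝ, G xh ≤ G z) :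
    ∀ i : ℕ, 1 ≤ i → i ≤ m →
      |xh i| ≤ max (max (My / Real.sqrt i) (My / Real.sqrt (m + 1 - i)))
        (My ^ 2 / (4 * lam)) := by
  intro i hi him
  have hx : ∀ z, fusedObjective m y a b lam xh ≤ fusedObjective m y a b lam z := by
    simpa only [hG, fusedObjective_eq (hi.trans him)] using hmin
  have hpos : ¬ (0 < a ∧ 0 < b) := fun h =>
    hsign (by rw [Real.sign_of_pos h.1, Real.sign_of_pos h.2])
  have hneg : ¬ (0 < -a ∧ 0 < -b) := fun h =>
    hsign (by rw [Real.sign_of_neg (neg_pos.1 h.1), Real.sign_of_neg (neg_pos.1 h.2)])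
  have hupper := le_max_of_forall_fusedObjective_le hx hpos hlam
    (fun k l hk hkl hl => (le_abs_self _).trans (hy k l hk hkl hl)) hi him
  have hlower := le_max_of_forall_fusedObjective_le (x := -xh) (y := -y)
    (fun z => by rw [fusedObjective_neg, ← neg_neg z, fusedObjective_neg]; exact hx (-z))
    hneg hlam
    (fun k l hk hkl hl => by
      simpa only [Pi.neg_apply, sum_neg_distrib] using (neg_le_abs _).trans (hy k l hk hkl hl))
    hi him
  rw [Pi.neg_apply] at hlower
  exact abs_le.2 ⟨by linarith, hupper⟩

/-- element-wise bound for the one-interval fused lasso minimizer when the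
boundary values `a` and `b` are nonzero and have opposite signs. -/
theorem fused_lasso_one_interval_elementwise_bound_opposite_signs
    (m : ℕ) (hm : 1 ≤ m)
    (y : ℕ → ℝ) (a b : ℝ) (lam My : ℝ) (hlam : 0 < lam) (hMy : 0 < My)
    (ha : a ≠ 0) (hb : b ≠ 0) (hsign : Real.sign a ≠ Real.sign b)
    (hy : ∀ k l : ℕ, 1 ≤ k → k ≤ l → l ≤ m →
      |∑ i ∈ Finset.Icc k l, y i| ≤ My * Real.sqrt (l - k + 1))
    (G : (ℕ → ℝ) → ℝ)
    (hG : ∀ z : ℕ → ℝ, G z =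
      ∑ i ∈ Finset.Icc 1 m, (z i - y i) ^ 2
        + lam * (|z 1 - a| + |z m - b| + ∑ i ∈ Finset.Icc 1 (m - 1), |z i - z (i + 1)|))
    (xh : ℕ → ℝ) (hmin : ∀ z : ℕ → ℝ, G xh ≤ G z) :
    ∀ i : ℕ, 1 ≤ i → i ≤ m →
      |xh i| ≤ max (max (My / Real.sqrt i) (My / Real.sqrt (m + 1 - i)))
        (My ^ 2 / (4 * lam)) :=
  fused_lasso_one_interval_elementwise_bound_opposite_signs_general m y a b lam My hlam hsign hy G
    hG xh hmin
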